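/- arXiv:2209.14579 — 2 statements merged into one kernel-verified Lean document; each statement's English description precedes it below -/
import Mathlib

section
/- Let A ∈ ℝ^{n×n}, 1 ≤ s < d(A), and let v ∈ ℝⁿ be a unit vector with d(A,v) ≥ s+1. Let w̃ = P(A)v be the Arnoldi projection of v (w̃ ∈ A^s v + K_s(A,v), w̃ ⟂ K_s(A,v)), and set w = w̃/‖w̃‖. Then for every monic polynomial q of degree s, ‖w̃‖ = ⟨v, q(Aᵀ)w⟩. Consequently d(Aᵀ,w) ≥ s+1. -/
open Polynomial Filter Topology Matrix

noncomputable section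

def mulv {ι : Type*} [Fintype ι] (A : Matrix ι ι ℝ) (v : EuclideanSpace ℝ ι) :
    EuclideanSpace ℝ ι :=
  (WithLp.equiv 2 (ι → ℝ)).symm (A.mulVec ((WithLp.equiv 2 (ι → ℝ)) v))

def Krylov {ι : Type*} [Fintype ι] [DecidableEq ι] (A : Matrix ι ι ℝ) (s : ℕ) (v : EuclideanSpace ℝ ι) :
    Submodule ℝ (EuclideanSpace ℝ ι) :=
  Submodule.span ℝ (Set.range fun i : Fin s => mulv (A ^ (i : ℕ)) v)

def IsArnoldiProj {ι : Type*} [Fintype ι] [DecidableEq ι] (A : Matrix ι ι ℝ) (s : ℕ)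
    (v w : EuclideanSpace ℝ ι) : Prop :=
  w - mulv (A ^ s) v ∈ Krylov A s v ∧ ∀ u ∈ Krylov A s v, inner ℝ w u = (0 : ℝ)

def vgrade {ι : Type*} [Fintype ι] [DecidableEq ι] (A : Matrix ι ι ℝ)
    (v : EuclideanSpace ℝ ι) : ℕ :=
  sInf {d | ∃ p : ℝ[X], p ≠ 0 ∧ p.natDegree = d ∧ mulv (aeval A p) v = 0}

def dmin {ι : Type*} [Fintype ι] [DecidableEq ι] (A : Matrix ι ι ℝ) : ℕ :=
  (minpoly ℝ A).natDegree

def Phi {ι : Type*} [Fintype ι] [DecidableEq ι] (A : Matrix ι ι ℝ) (s : ℕ) : ℝ :=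
  sSup {r | ∃ v : EuclideanSpace ℝ ι, ‖v‖ = 1 ∧
    r = sInf {t | ∃ q : ℝ[X], q.Monic ∧ q.natDegree = s ∧ t = ‖mulv (aeval A q) v‖}}

def opNorm {ι : Type*} [Fintype ι] [DecidableEq ι] (A : Matrix ι ι ℝ) : ℝ :=
  ‖Matrix.toEuclideanCLM (𝕜 := ℝ) A‖
/-! Both `q(A) v` and `w̃` lie in `A^s v + K_s(A, v)` while `w̃ ⟂ K_s(A, v)`, so
`⟨w̃, q(A) v⟩ = ‖w̃‖²`; moving `q(A)` across the inner product gives the identity. The vector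
`w̃` is nonzero, since otherwise `A^s v ∈ K_s(A, v)` and `d(A, v) ≤ s`. Any nonzero annihilator
of `w` of degree `≤ s`, multiplied by a power of `X` and normalized, would be a monic `q` of
degree `s` with `q(Aᵀ) w = 0`, contradicting `⟨v, q(Aᵀ) w⟩ = ‖w̃‖ ≠ 0`. -/

section Krylov

variable {ι : Type*} [Fintype ι]

lemma mulv_mul (A B : Matrix ι ι ℝ) (v : EuclideanSpace ℝ ι) :
    mulv (A * B) v = mulv A (mulv B v) := by
  simp [mulv, mulVec_mulVec]

lemma mulv_sub (A B : Matrix ι ι ℝ) (v : EuclideanSpace ℝ ι) :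
    mulv (A - B) v = mulv A v - mulv B v := by
  simp [mulv, sub_mulVec]

lemma mulv_zero (A : Matrix ι ι ℝ) : mulv A 0 = 0 := by
  simp [mulv]

variable [DecidableEq ι]

lemma mulv_eq_toEuclideanLin (A : Matrix ι ι ℝ) (v : EuclideanSpace ℝ ι) :
    mulv A v = A.toEuclideanLin v := rfl

lemma inner_mulv_eq_inner_mulv_transpose (A : Matrix ι ι ℝ) (v u : EuclideanSpace ℝ ι) :
    inner ℝ (mulv A v) u = inner ℝ v (mulv Aᵀ u) := by
  rw [mulv_eq_toEuclideanLin, mulv_eq_toEuclideanLin, ← conjTranspose_eq_transpose_of_trivial,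
    Matrix.toEuclideanLin_conjTranspose_eq_adjoint, LinearMap.adjoint_inner_right]

lemma aeval_transpose (A : Matrix ι ι ℝ) (p : ℝ[X]) : aeval Aᵀ p = (aeval A p)ᵀ := by
  induction p using Polynomial.induction_on' with
  | add p q hp hq => simp [hp, hq]
  | monomial k a => simp [aeval_monomial, ← Algebra.smul_def, transpose_pow]

lemma mulv_aeval_eq_sum (A : Matrix ι ι ℝ) (v : EuclideanSpace ℝ ι) {s : ℕ} {p : ℝ[X]}
    (hp : p.degree < s) :
    mulv (aeval A p) v = ∑ i : Fin s, p.coeff i • mulv (A ^ (i : ℕ)) v := by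
  rw [aeval_def, eval₂_eq_sum, ← sum_fin _ (fun _ => by simp) hp]
  simp [mulv_eq_toEuclideanLin, Algebra.algebraMap_eq_smul_one]

lemma mem_Krylov_iff {A : Matrix ι ι ℝ} {s : ℕ} {v u : EuclideanSpace ℝ ι} :
    u ∈ Krylov A s v ↔ ∃ p : ℝ[X], p.degree < s ∧ mulv (aeval A p) v = u := by
  rw [Krylov, Submodule.mem_span_range_iff_exists_fun]
  constructor
  · rintro ⟨c, rfl⟩
    refine ⟨∑ i : Fin s, C (c i) * X ^ (i : ℕ), degree_sum_fin_lt c, ?_⟩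
    rw [mulv_aeval_eq_sum A v (degree_sum_fin_lt c)]
    simp [finsetSum_coeff, Fin.val_inj]
  · rintro ⟨p, hp, rfl⟩
    exact ⟨fun i => p.coeff i, (mulv_aeval_eq_sum A v hp).symm⟩

lemma mulv_aeval_sub_pow_mem_Krylov (A : Matrix ι ι ℝ) (v : EuclideanSpace ℝ ι) {s : ℕ}
    {q : ℝ[X]} (hq : q.Monic) (hqs : q.natDegree = s) :
    mulv (aeval A q) v - mulv (A ^ s) v ∈ Krylov A s v := by
  have hdeg : q.degree = (X ^ s : ℝ[X]).degree := by
    rw [degree_X_pow, degree_eq_natDegree hq.ne_zero, hqs]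
  refine mem_Krylov_iff.2 ⟨q - X ^ s, ?_, by rw [map_sub, aeval_X_pow, mulv_sub]⟩
  simpa [hdeg] using
    degree_sub_lt_left hdeg hq.ne_zero (by rw [hq.leadingCoeff, leadingCoeff_X_pow])

lemma vgrade_le {A : Matrix ι ι ℝ} {u : EuclideanSpace ℝ ι} {p : ℝ[X]} (hp : p ≠ 0)
    (hpu : mulv (aeval A p) u = 0) : vgrade A u ≤ p.natDegree :=
  Nat.sInf_le ⟨p, hp, rfl, hpu⟩

lemma vgrade_le_of_mem_Krylov {A : Matrix ι ι ℝ} {s : ℕ} {v : EuclideanSpace ℝ ι}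
    (h : mulv (A ^ s) v ∈ Krylov A s v) : vgrade A v ≤ s := by
  obtain ⟨p, hp, hpv⟩ := mem_Krylov_iff.1 h
  have hdeg : (X ^ s - p : ℝ[X]).natDegree = s := natDegree_eq_of_degree_eq_some <| by
    rw [degree_sub_eq_left_of_degree_lt (by rwa [degree_X_pow]), degree_X_pow]
  have hkill : mulv (aeval A (X ^ s - p)) v = 0 := by
    rw [map_sub, aeval_X_pow, mulv_sub, hpv, sub_self]
  simpa [hdeg] using vgrade_le (monic_X_pow_sub hp).ne_zero hkill

lemma succ_le_vgrade_of_forall_monic {A : Matrix ι ι ℝ} {u : EuclideanSpace ℝ ι} {k : ℕ}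
    (h : ∀ q : ℝ[X], q.Monic → q.natDegree = k → mulv (aeval A q) u ≠ 0) :
    k + 1 ≤ vgrade A u := by
  refine le_csInf
    ⟨_, A.charpoly, A.charpoly_monic.ne_zero, rfl, by simp [aeval_self_charpoly, mulv]⟩ ?_
  rintro d ⟨p, hp, rfl, hpu⟩
  by_contra! hlt
  have hp' : (C p.leadingCoeff⁻¹ * p).Monic := mul_comm p _ ▸ monic_mul_leadingCoeff_inv hp
  let q := X ^ (k - p.natDegree) * (C p.leadingCoeff⁻¹ * p)
  have hqk : q.natDegree = k := by
    rw [(monic_X_pow _).natDegree_mul hp', natDegree_X_pow, mul_comm,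
      natDegree_mul_leadingCoeff_inv _ hp]
    omega
  refine h q ((monic_X_pow _).mul hp') hqk ?_
  simp only [q, map_mul, mulv_mul, hpu, mulv_zero]

namespace IsArnoldiProj

variable {A : Matrix ι ι ℝ} {s : ℕ} {v w : EuclideanSpace ℝ ι}

lemma ne_zero (hw : IsArnoldiProj A s v w) (hv : s < vgrade A v) : w ≠ 0 := by
  rintro rfl
  have h := neg_mem hw.1
  rw [zero_sub, neg_neg] at h
  exact (vgrade_le_of_mem_Krylov h).not_gt hv

lemma inner_mulv_aeval_eq_norm_sq (hw : IsArnoldiProj A s v w) {q : ℝ[X]} (hq : q.Monic)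
    (hqs : q.natDegree = s) : inner ℝ w (mulv (aeval A q) v) = ‖w‖ ^ 2 := by
  have hmem : mulv (aeval A q) v - w ∈ Krylov A s v := by
    simpa using sub_mem (mulv_aeval_sub_pow_mem_Krylov A v hq hqs) hw.1
  have := hw.2 _ hmem
  rw [inner_sub_right, real_inner_self_eq_norm_sq] at this
  linarith

lemma inner_mulv_aeval_transpose_eq_norm (hw : IsArnoldiProj A s v w) (hw0 : w ≠ 0) {q : ℝ[X]}
    (hq : q.Monic) (hqs : q.natDegree = s) :
    inner ℝ v (mulv (aeval Aᵀ q) (‖w‖⁻¹ • w)) = ‖w‖ := by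
  rw [aeval_transpose, ← inner_mulv_eq_inner_mulv_transpose, real_inner_smul_right,
    real_inner_comm, hw.inner_mulv_aeval_eq_norm_sq hq hqs]
  field_simp [norm_ne_zero_iff.2 hw0]

end IsArnoldiProj

end Krylov

theorem arnoldi_cross_identity_general {n : ℕ} (A : Matrix (Fin n) (Fin n) ℝ) (s : ℕ)
    (v : EuclideanSpace ℝ (Fin n)) (hgrade : s + 1 ≤ vgrade A v)
    (wt : EuclideanSpace ℝ (Fin n)) (hwt : IsArnoldiProj A s v wt) :
    (∀ q : ℝ[X], q.Monic → q.natDegree = s →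
      ‖wt‖ = (inner ℝ v (mulv (aeval Aᵀ q) (‖wt‖⁻¹ • wt)) : ℝ)) ∧
    s + 1 ≤ vgrade Aᵀ (‖wt‖⁻¹ • wt) := by
  have hwt0 : wt ≠ 0 := hwt.ne_zero hgrade
  have cross : ∀ q : ℝ[X], q.Monic → q.natDegree = s →
      ‖wt‖ = inner ℝ v (mulv (aeval Aᵀ q) (‖wt‖⁻¹ • wt)) :=
    fun q hq hqs => (hwt.inner_mulv_aeval_transpose_eq_norm hwt0 hq hqs).symm
  refine ⟨cross, succ_le_vgrade_of_forall_monic fun q hq hqs hkill => hwt0 ?_⟩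
  simpa [hkill] using cross q hq hqs

theorem arnoldi_cross_identity {n : ℕ} (A : Matrix (Fin n) (Fin n) ℝ) (s : ℕ)
    (hs1 : 1 ≤ s) (hs2 : s < dmin A) (v : EuclideanSpace ℝ (Fin n))
    (hv : ‖v‖ = 1) (hgrade : s + 1 ≤ vgrade A v)
    (wt : EuclideanSpace ℝ (Fin n)) (hwt : IsArnoldiProj A s v wt) :
    (∀ q : ℝ[X], q.Monic → q.natDegree = s →
      ‖wt‖ = (inner ℝ v (mulv (aeval Aᵀ q) (‖wt‖⁻¹ • wt)) : ℝ)) ∧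
    s + 1 ≤ vgrade Aᵀ (‖wt‖⁻¹ • wt) :=
  arnoldi_cross_identity_general A s v hgrade wt hwt
end
end

section
/- Under the setup of the Arnoldi cross iteration ACI(s) (A ∈ ℝ^{n×n}, 1 ≤ s < d(A), unit vector v₀ with d(A,v₀) ≥ s+1), the iterates satisfy (1/2)‖v_{k+1} − v_k‖² = 1 − ‖w̃_k‖/‖ṽ_{k+1}‖ for every k ≥ 0, and consequently ‖v_{k+1} − v_k‖ → 0 and ‖w_{k+1} − w_k‖ → 0 as k → ∞. -/
open Polynomial Filter Topology Matrix

noncomputable section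

def ACI {ι : Type*} [Fintype ι] [DecidableEq ι] (A : Matrix ι ι ℝ) (s : ℕ)
    (v wt w vt : ℕ → EuclideanSpace ℝ ι) : Prop :=
  (∀ k, IsArnoldiProj A s (v k) (wt k)) ∧
  (∀ k, w k = ‖wt k‖⁻¹ • wt k) ∧
  (∀ k, IsArnoldiProj Aᵀ s (w k) (vt (k + 1))) ∧
  (∀ k, v (k + 1) = ‖vt (k + 1)‖⁻¹ • vt (k + 1))

/-! Each Arnoldi projection is orthogonal to its Krylov space, and `w ⟂ K_s(A, v)` transposes to
`v ⟂ K_s(Aᵀ, w)`; hence the cross identities `⟪ṽ_{k+1}, v_k⟫ = ⟪w_k, w̃_k⟫ = ‖w̃_k‖` and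
`⟪w̃_{k+1}, w_k⟫ = ‖ṽ_{k+1}‖`. With Cauchy–Schwarz they give the interlacing
`‖w̃_k‖ ≤ ‖ṽ_{k+1}‖ ≤ ‖w̃_{k+1}‖`, bounded by `‖A ^ s‖` and positive since `d(A, v₀) > s`, so both
sequences converge to one positive limit. For unit vectors `½‖x - y‖² = 1 - ⟪x, y⟫`, and
`⟪v_{k+1}, v_k⟫ = ‖w̃_k‖ / ‖ṽ_{k+1}‖`, `⟪w_{k+1}, w_k⟫ = ‖ṽ_{k+1}‖ / ‖w̃_{k+1}‖` tend to `1`. -/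

open scoped RealInnerProductSpace

lemma norm_inv_norm_smul_le_one {E : Type*} [NormedAddCommGroup E] [NormedSpace ℝ E] (x : E) :
    ‖‖x‖⁻¹ • x‖ ≤ 1 := by
  obtain rfl | hx := eq_or_ne x 0
  · simp
  · exact (norm_smul_inv_norm hx).le

section RealInner

variable {E : Type*} [NormedAddCommGroup E] [InnerProductSpace ℝ E]

lemma real_inner_le_norm_of_norm_le_one (x : E) {y : E} (hy : ‖y‖ ≤ 1) : ⟪x, y⟫ ≤ ‖x‖ :=
  (real_inner_le_norm x y).trans (mul_le_of_le_one_right (norm_nonneg x) hy)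

lemma half_mul_norm_sub_sq_of_norm_eq_one {x y : E} (hx : ‖x‖ = 1) (hy : ‖y‖ = 1) :
    1 / 2 * ‖x - y‖ ^ 2 = 1 - ⟪x, y⟫ := by
  rw [norm_sub_sq_real, hx, hy]
  ring

lemma tendsto_norm_sub_of_tendsto_inner {α : Type*} {l : Filter α} {x y : α → E}
    (hx : ∀ k, ‖x k‖ = 1) (hy : ∀ k, ‖y k‖ = 1) (h : Tendsto (fun k => ⟪x k, y k⟫) l (𝓝 1)) :
    Tendsto (fun k => ‖x k - y k‖) l (𝓝 0) := by
  have hsqrt : Tendsto (fun k => √(2 * (1 - ⟪x k, y k⟫))) l (𝓝 √(2 * (1 - 1))) :=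
    ((tendsto_const_nhds.sub h).const_mul 2).sqrt
  rw [sub_self, mul_zero, Real.sqrt_zero] at hsqrt
  refine hsqrt.congr fun k => ?_
  rw [← half_mul_norm_sub_sq_of_norm_eq_one (hx k) (hy k), ← mul_assoc]
  norm_num [Real.sqrt_sq (norm_nonneg _)]

end RealInner

lemma tendsto_div_of_interlacing {a b : ℕ → ℝ} (ha0 : 0 < a 0) (hab : ∀ k, a k ≤ b k)
    (hba : ∀ k, b k ≤ a (k + 1)) (hbdd : BddAbove (Set.range a)) :
    Tendsto (fun k => a k / b k) atTop (𝓝 1) ∧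
      Tendsto (fun k => b k / a (k + 1)) atTop (𝓝 1) := by
  have hmono : Monotone a := monotone_nat_of_le_succ fun k => (hab k).trans (hba k)
  have ha : Tendsto a atTop (𝓝 (⨆ k, a k)) := tendsto_atTop_ciSup hmono hbdd
  have ha1 : Tendsto (fun k => a (k + 1)) atTop (𝓝 (⨆ k, a k)) :=
    ha.comp (tendsto_add_atTop_nat 1)
  have hb : Tendsto b atTop (𝓝 (⨆ k, a k)) :=
    tendsto_of_tendsto_of_tendsto_of_le_of_le ha ha1 hab hba
  have hL : (⨆ k, a k) ≠ 0 := (ha0.trans_le (le_ciSup hbdd 0)).ne'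
  rw [← div_self hL]
  exact ⟨ha.div hb hL, hb.div ha1 hL⟩

section Arnoldi

variable {ι : Type*} [Fintype ι] [DecidableEq ι] {A : Matrix ι ι ℝ} {s : ℕ}

lemma mulv_eq_toEuclideanCLM (A : Matrix ι ι ℝ) (x : EuclideanSpace ℝ ι) :
    mulv A x = toEuclideanCLM (𝕜 := ℝ) A x :=
  rfl

lemma inner_mulv_transpose (A : Matrix ι ι ℝ) (x y : EuclideanSpace ℝ ι) :
    ⟪mulv Aᵀ x, y⟫ = ⟪x, mulv A y⟫ := by
  rw [mulv_eq_toEuclideanCLM, mulv_eq_toEuclideanCLM, ← conjTranspose_eq_transpose_of_trivial,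
    ← star_eq_conjTranspose, map_star, ContinuousLinearMap.star_eq_adjoint,
    ContinuousLinearMap.adjoint_inner_left]

lemma inner_eq_zero_of_mem_krylov_transpose {p x u : EuclideanSpace ℝ ι}
    (hx : ∀ u ∈ Krylov A s p, ⟪x, u⟫ = 0) (hu : u ∈ Krylov Aᵀ s x) : ⟪u, p⟫ = 0 := by
  have hle : Krylov Aᵀ s x ≤ (ℝ ∙ p)ᗮ := Submodule.span_le.2 <| Set.range_subset_iff.2 fun i => by
    rw [SetLike.mem_coe, Submodule.mem_orthogonal_singleton_iff_inner_left, ← transpose_pow,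
      inner_mulv_transpose]
    exact hx _ (Submodule.subset_span ⟨i, rfl⟩)
  exact Submodule.mem_orthogonal_singleton_iff_inner_left.1 (hle hu)

lemma vgrade_le_of_mulv_pow_mem_krylov {v : EuclideanSpace ℝ ι}
    (h : mulv (A ^ s) v ∈ Krylov A s v) : vgrade A v ≤ s := by
  obtain ⟨c, hc⟩ := (Submodule.mem_span_range_iff_exists_fun ℝ).1 h
  set q : ℝ[X] := ∑ i : Fin s, C (c i) * X ^ (i : ℕ)
  have hq : q.degree < s := degree_sum_fin_lt c
  have hdeg : (X ^ s - q).natDegree = s := by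
    apply natDegree_eq_of_degree_eq_some
    rw [degree_sub_eq_left_of_degree_lt (by rwa [degree_X_pow]), degree_X_pow]
  have haeval : aeval A (X ^ s - q) = A ^ s - ∑ i : Fin s, c i • A ^ (i : ℕ) := by
    simp [q, Algebra.smul_def]
  have heval : mulv (aeval A (X ^ s - q)) v = 0 := by
    simp only [mulv_eq_toEuclideanCLM] at hc ⊢
    rw [haeval, map_sub, map_sum, _root_.sub_apply, _root_.sum_apply]
    simp only [map_smul, _root_.smul_apply, hc, sub_self]
  exact Nat.sInf_le ⟨_, (monic_X_pow_sub hq).ne_zero, hdeg, heval⟩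

namespace IsArnoldiProj

variable {p x y : EuclideanSpace ℝ ι}

lemma ne_zero_of_lt_vgrade (h : IsArnoldiProj A s p x) (hp : s < vgrade A p) : x ≠ 0 := by
  rintro rfl
  refine hp.not_ge (vgrade_le_of_mulv_pow_mem_krylov ?_)
  simpa using neg_mem h.1

lemma norm_le (h : IsArnoldiProj A s p x) : ‖x‖ ≤ opNorm (A ^ s) * ‖p‖ := by
  have hsq : ‖x‖ ^ 2 = ⟪x, mulv (A ^ s) p⟫ := by
    have := h.2 _ h.1
    rw [inner_sub_right, real_inner_self_eq_norm_sq] at this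
    linarith
  have hle : ⟪x, mulv (A ^ s) p⟫ ≤ ‖x‖ * (opNorm (A ^ s) * ‖p‖) :=
    (real_inner_le_norm _ _).trans
      (mul_le_mul_of_nonneg_left ((toEuclideanCLM (𝕜 := ℝ) (A ^ s)).le_opNorm p) (norm_nonneg x))
  have : 0 ≤ opNorm (A ^ s) * ‖p‖ := mul_nonneg (norm_nonneg _) (norm_nonneg p)
  nlinarith

lemma inner_eq_inner {w : EuclideanSpace ℝ ι} (hx : IsArnoldiProj A s p x)
    (hw : ∀ u ∈ Krylov A s p, ⟪w, u⟫ = 0) (hy : IsArnoldiProj Aᵀ s w y) : ⟪y, p⟫ = ⟪w, x⟫ := by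
  have h1 := inner_eq_zero_of_mem_krylov_transpose hw hy.1
  have h2 := hw _ hx.1
  rw [inner_sub_left, ← transpose_pow, inner_mulv_transpose] at h1
  rw [inner_sub_right] at h2
  linarith

lemma inner_normalize (hx : IsArnoldiProj A s p x) (hy : IsArnoldiProj Aᵀ s (‖x‖⁻¹ • x) y) :
    ⟪y, p⟫ = ‖x‖ := by
  rw [hx.inner_eq_inner (fun u hu => by rw [real_inner_smul_left, hx.2 u hu, mul_zero]) hy,
    real_inner_smul_left, real_inner_self_eq_norm_sq]
  obtain h | h := eq_or_ne ‖x‖ 0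
  · simp [h]
  · field_simp

end IsArnoldiProj

end Arnoldi

namespace ACI

variable {ι : Type*} [Fintype ι] [DecidableEq ι] {A : Matrix ι ι ℝ} {s : ℕ}
  {v wt w vt : ℕ → EuclideanSpace ℝ ι}

lemma inner_vt_succ (h : ACI A s v wt w vt) (k : ℕ) : ⟪vt (k + 1), v k⟫ = ‖wt k‖ :=
  (h.1 k).inner_normalize (h.2.1 k ▸ h.2.2.1 k)

lemma inner_wt_succ (h : ACI A s v wt w vt) (k : ℕ) : ⟪wt (k + 1), w k⟫ = ‖vt (k + 1)‖ :=
  (h.2.2.1 k).inner_normalize (by rw [transpose_transpose, ← h.2.2.2 k]; exact h.1 (k + 1))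

lemma inner_v_succ (h : ACI A s v wt w vt) (k : ℕ) :
    ⟪v (k + 1), v k⟫ = ‖wt k‖ / ‖vt (k + 1)‖ := by
  rw [h.2.2.2 k, real_inner_smul_left, h.inner_vt_succ, inv_mul_eq_div]

lemma inner_w_succ (h : ACI A s v wt w vt) (k : ℕ) :
    ⟪w (k + 1), w k⟫ = ‖vt (k + 1)‖ / ‖wt (k + 1)‖ := by
  rw [h.2.1 (k + 1), real_inner_smul_left, h.inner_wt_succ, inv_mul_eq_div]

lemma norm_v_le_one (h : ACI A s v wt w vt) (hv0 : ‖v 0‖ = 1) : ∀ k, ‖v k‖ ≤ 1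
  | 0 => hv0.le
  | k + 1 => h.2.2.2 k ▸ norm_inv_norm_smul_le_one _

lemma norm_w_le_one (h : ACI A s v wt w vt) (k : ℕ) : ‖w k‖ ≤ 1 :=
  h.2.1 k ▸ norm_inv_norm_smul_le_one _

lemma norm_wt_le_norm_vt (h : ACI A s v wt w vt) (hv0 : ‖v 0‖ = 1) (k : ℕ) :
    ‖wt k‖ ≤ ‖vt (k + 1)‖ :=
  h.inner_vt_succ k ▸ real_inner_le_norm_of_norm_le_one _ (h.norm_v_le_one hv0 k)

lemma norm_vt_le_norm_wt (h : ACI A s v wt w vt) (k : ℕ) : ‖vt (k + 1)‖ ≤ ‖wt (k + 1)‖ :=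
  h.inner_wt_succ k ▸ real_inner_le_norm_of_norm_le_one _ (h.norm_w_le_one k)

lemma norm_wt_le (h : ACI A s v wt w vt) (hv0 : ‖v 0‖ = 1) (k : ℕ) : ‖wt k‖ ≤ opNorm (A ^ s) :=
  (h.1 k).norm_le.trans (mul_le_of_le_one_right (norm_nonneg _) (h.norm_v_le_one hv0 k))

lemma norm_wt_pos (h : ACI A s v wt w vt) (hv0 : ‖v 0‖ = 1) (hg : s < vgrade A (v 0))
    (k : ℕ) : 0 < ‖wt k‖ :=
  (norm_pos_iff.2 ((h.1 0).ne_zero_of_lt_vgrade hg)).trans_le <|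
    monotone_nat_of_le_succ (fun k => (h.norm_wt_le_norm_vt hv0 k).trans (h.norm_vt_le_norm_wt k))
      (Nat.zero_le k)

lemma norm_v_eq_one (h : ACI A s v wt w vt) (hv0 : ‖v 0‖ = 1) (hg : s < vgrade A (v 0)) :
    ∀ k, ‖v k‖ = 1
  | 0 => hv0
  | k + 1 => h.2.2.2 k ▸ norm_smul_inv_norm (norm_pos_iff.1 <|
      (h.norm_wt_pos hv0 hg k).trans_le (h.norm_wt_le_norm_vt hv0 k))

lemma norm_w_eq_one (h : ACI A s v wt w vt) (hv0 : ‖v 0‖ = 1) (hg : s < vgrade A (v 0))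
    (k : ℕ) : ‖w k‖ = 1 :=
  h.2.1 k ▸ norm_smul_inv_norm (norm_pos_iff.1 (h.norm_wt_pos hv0 hg k))

end ACI

theorem aci_consecutive_tendsto_zero_general {n : ℕ} (A : Matrix (Fin n) (Fin n) ℝ) (s : ℕ)
    (v wt w vt : ℕ → EuclideanSpace ℝ (Fin n))
    (hv0 : ‖v 0‖ = 1) (hg : s + 1 ≤ vgrade A (v 0))
    (haci : ACI A s v wt w vt) :
    (∀ k, (1 / 2 : ℝ) * ‖v (k + 1) - v k‖ ^ 2 = 1 - ‖wt k‖ / ‖vt (k + 1)‖) ∧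
    Tendsto (fun k => ‖v (k + 1) - v k‖) atTop (𝓝 0) ∧
    Tendsto (fun k => ‖w (k + 1) - w k‖) atTop (𝓝 0) := by
  have hv := haci.norm_v_eq_one hv0 hg
  have hw := haci.norm_w_eq_one hv0 hg
  obtain ⟨hv_ratio, hw_ratio⟩ := tendsto_div_of_interlacing (haci.norm_wt_pos hv0 hg 0)
    (haci.norm_wt_le_norm_vt hv0) haci.norm_vt_le_norm_wt
    ⟨opNorm (A ^ s), Set.forall_mem_range.2 (haci.norm_wt_le hv0)⟩
  refine ⟨fun k => ?_, ?_, ?_⟩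
  · rw [half_mul_norm_sub_sq_of_norm_eq_one (hv _) (hv k), haci.inner_v_succ]
  · refine tendsto_norm_sub_of_tendsto_inner (fun k => hv _) hv ?_
    simpa only [haci.inner_v_succ] using hv_ratio
  · refine tendsto_norm_sub_of_tendsto_inner (fun k => hw _) hw ?_
    simpa only [haci.inner_w_succ] using hw_ratio

theorem aci_consecutive_tendsto_zero {n : ℕ} (A : Matrix (Fin n) (Fin n) ℝ) (s : ℕ)
    (hs1 : 1 ≤ s) (hs2 : s < dmin A)
    (v wt w vt : ℕ → EuclideanSpace ℝ (Fin n))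
    (hv0 : ‖v 0‖ = 1) (hg : s + 1 ≤ vgrade A (v 0))
    (haci : ACI A s v wt w vt) :
    (∀ k, (1 / 2 : ℝ) * ‖v (k + 1) - v k‖ ^ 2 = 1 - ‖wt k‖ / ‖vt (k + 1)‖) ∧
    Tendsto (fun k => ‖v (k + 1) - v k‖) atTop (𝓝 0) ∧
    Tendsto (fun k => ‖w (k + 1) - w k‖) atTop (𝓝 0) :=
  aci_consecutive_tendsto_zero_general A s v wt w vt hv0 hg haci
end
end
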